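/- arXiv:2508.11236 — 2 statements merged into one kernel-verified Lean document; each statement's English description precedes it below -/
import Mathlib

section
/- For positive integers k and l, the rational function ([2]_{t^2} [4]_{t^2} ⋯ [2k+2l]_{t^2}) / ([k]_{t^2} [2]_{t^2} [4]_{t^2} ⋯ [2(k-1)]_{t^2} · [2]_{t^2} [4]_{t^2} ⋯ [2l]_{t^2}) equals binom(k+l, k)_{t^4} · [2]_{t^{2k}}. In particular it is a polynomial with nonnegative integer coefficients. -/
open Polynomial

/-- The quantum number `[a]_{t^b} = 1 + t^b + ⋯ + t^{b(a-1)}` as a polynomial in `ℚ[t]`. -/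
noncomputable def qnumPow (a b : ℕ) : Polynomial ℚ := ∑ i ∈ Finset.range a, X ^ (b * i)

/-- The Gaussian (quantum) binomial coefficient `binom(n,k)_q` as a polynomial in `ℤ[q]`,
counting `k`-element subsets of `{0, …, n-1}` by inversions. -/
noncomputable def gaussBinom (n k : ℕ) : Polynomial ℤ :=
  ∑ S ∈ Finset.powersetCard k (Finset.range n), X ^ ((∑ i ∈ S, i) - k * (k - 1) / 2)

/-- The Gaussian binomial `binom(n,k)` in the variable `t^m`, over `ℚ`. -/
noncomputable def gaussBinomPow (n k m : ℕ) : Polynomial ℚ :=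
  ((gaussBinom n k).map (Int.castRingHom ℚ)).comp (X ^ m)

/-!
Since `[2a]_{t²} = [2]_{t²} [a]_{t⁴}`, numerator and denominator are, up to powers of `[2]_{t²}`,
the `q`-factorials `[k+l]!`, `[k-1]!`, `[l]!` in `q = t⁴`. The `q`-Pascal rule gives
`[k+l]! = binom(k+l,k)_q [k]! [l]!`, and what remains is `[2]_{t²} [k]_{t⁴} / [k]_{t²}`, which is
`[2]_{t^{2k}}` because both `[2]_{t²} [k]_{t⁴}` and `[2]_{t^{2k}} [k]_{t²}` equal `[2k]_{t²}`.
The Gaussian binomial is a sum of monomials, so the result has coefficients in `ℕ`.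
-/

open Finset

lemma qnumPow_add (a c b : ℕ) : qnumPow (a + c) b = qnumPow a b + X ^ (b * a) * qnumPow c b := by
  simp only [qnumPow, sum_range_add, mul_sum, ← pow_add, mul_add]

lemma qnumPow_one (b : ℕ) : qnumPow 1 b = 1 := by
  simp [qnumPow]

lemma qnumPow_two (b : ℕ) : qnumPow 2 b = 1 + X ^ b := by
  simp [qnumPow, sum_range_succ]

lemma qnumPow_two_mul' (a b : ℕ) :
    qnumPow (2 * a) b = qnumPow 2 (a * b) * qnumPow a b := by
  rw [two_mul, qnumPow_add, qnumPow_two]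
  ring

lemma qnumPow_two_mul (a b : ℕ) :
    qnumPow (2 * a) b = qnumPow 2 b * qnumPow a (2 * b) := by
  induction a with
  | zero => simp [qnumPow]
  | succ a ih =>
    rw [mul_add, mul_one, qnumPow_add, ih, qnumPow_add, qnumPow_one]
    ring

lemma eval_one_qnumPow (a b : ℕ) : (qnumPow a b).eval 1 = a := by
  simp [qnumPow, eval_finsetSum]

lemma qnumPow_ne_zero {a : ℕ} (ha : 0 < a) (b : ℕ) : qnumPow a b ≠ 0 := by
  intro h
  have := eval_one_qnumPow a b
  rw [h, eval_zero] at this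
  exact ha.ne' (by exact_mod_cast this.symm)

lemma sum_range_card_le_sum (S : Finset ℕ) : ∑ i ∈ range #S, i ≤ ∑ i ∈ S, i := by
  induction S using Finset.induction_on_max with
  | empty => simp
  | insert a S ha ih =>
    have haS : a ∉ S := fun h => lt_irrefl a (ha a h)
    have hcard : #S ≤ a := by
      simpa using card_le_card (fun x hx => mem_range.mpr (ha x hx) : S ⊆ range a)
    rw [card_insert_of_notMem haS, sum_range_succ, sum_insert haS]
    omega

lemma sum_powersetCard_succ_insert {α M : Type*} [DecidableEq α] [AddCommMonoid M]
    {a : α} {s : Finset α} (ha : a ∉ s) (k : ℕ) (f : Finset α → M) :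
    ∑ t ∈ powersetCard (k + 1) (insert a s), f t =
      ∑ t ∈ powersetCard (k + 1) s, f t + ∑ t ∈ powersetCard k s, f (insert a t) := by
  have hnot : ∀ t ∈ powersetCard k s, a ∉ t := fun t ht h =>
    ha ((mem_powersetCard.mp ht).1 h)
  rw [powersetCard_succ_insert ha, sum_union, sum_image]
  · intro t ht u hu htu
    rw [← erase_insert (hnot t ht), htu, erase_insert (hnot u hu)]
  · refine disjoint_left.mpr fun t ht ht' => ?_
    obtain ⟨u, -, rfl⟩ := mem_image.mp ht'
    exact ha ((mem_powersetCard.mp ht).1 (mem_insert_self a u))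

lemma gaussBinom_zero_right (n : ℕ) : gaussBinom n 0 = 1 := by
  simp [gaussBinom]

lemma gaussBinom_self (n : ℕ) : gaussBinom n n = 1 := by
  have h := powersetCard_self (range n)
  rw [card_range] at h
  rw [gaussBinom, h, sum_singleton, sum_range_id, Nat.sub_self, pow_zero]

lemma gaussBinom_succ_succ (n k : ℕ) :
    gaussBinom (n + 1) (k + 1) = gaussBinom n (k + 1) + X ^ (n - k) * gaussBinom n k := by
  have hn : n ∉ range n := notMem_range_self
  rw [gaussBinom, range_add_one, sum_powersetCard_succ_insert hn, gaussBinom, gaussBinom, mul_sum]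
  congr 1
  refine sum_congr rfl fun S hS => ?_
  obtain ⟨hSsub, hScard⟩ := mem_powersetCard.mp hS
  rw [sum_insert fun h => hn (hSsub h), ← pow_add]
  congr 1
  have hkn : k ≤ n := by simpa [hScard] using card_le_card hSsub
  -- the truncated subtractions in the exponents never truncate
  have hmin := sum_range_card_le_sum S
  have htri : (k + 1) * (k + 1 - 1) / 2 = k * (k - 1) / 2 + k := by
    rw [← sum_range_id, ← sum_range_id, sum_range_succ]
  rw [hScard, sum_range_id] at hmin
  omega

/-- `[n]_q` over `ℤ`, where `gaussBinom` lives; `qnumPow n m` is its image under `q ↦ t ^ m`. -/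
noncomputable def qInt (n : ℕ) : ℤ[X] := ∑ i ∈ range n, X ^ i

noncomputable def qFactorial (n : ℕ) : ℤ[X] := ∏ i ∈ range n, qInt (i + 1)

lemma qInt_add (a c : ℕ) : qInt (a + c) = qInt a + X ^ a * qInt c := by
  simp only [qInt, sum_range_add, mul_sum, ← pow_add]

lemma qFactorial_succ (n : ℕ) : qFactorial (n + 1) = qFactorial n * qInt (n + 1) :=
  prod_range_succ _ _

lemma gaussBinom_mul_qFactorial_mul_qFactorial (k l : ℕ) :
    gaussBinom (k + l) k * qFactorial k * qFactorial l = qFactorial (k + l) := by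
  induction k generalizing l with
  | zero => simp [gaussBinom_zero_right, qFactorial]
  | succ k ihk =>
    induction l with
    | zero => simp [gaussBinom_self, qFactorial]
    | succ l ihl =>
      have hpascal := gaussBinom_succ_succ (k + 1 + l) k
      rw [show k + 1 + l - k = l + 1 by omega] at hpascal
      have hk := ihk (l + 1)
      rw [show k + (l + 1) = k + 1 + l by omega] at hk
      calc gaussBinom (k + 1 + (l + 1)) (k + 1) * qFactorial (k + 1) * qFactorial (l + 1)
          = (gaussBinom (k + 1 + l) (k + 1) * qFactorial (k + 1) * qFactorial l) * qInt (l + 1)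
            + X ^ (l + 1) * (gaussBinom (k + 1 + l) k * qFactorial k * qFactorial (l + 1))
              * qInt (k + 1) := by
            rw [← add_assoc, hpascal, qFactorial_succ k, qFactorial_succ l]
            ring
        _ = qFactorial (k + 1 + l) * (qInt (l + 1) + X ^ (l + 1) * qInt (k + 1)) := by
            rw [ihl, hk]
            ring
        _ = qFactorial (k + 1 + (l + 1)) := by
            rw [← qInt_add, ← add_assoc (k + 1) l 1, qFactorial_succ,
              show l + 1 + (k + 1) = k + 1 + l + 1 by omega]

lemma prod_qnumPow_eq_gaussBinomPow_mul (k l m : ℕ) :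
    ∏ i ∈ range (k + l), qnumPow (i + 1) m =
      gaussBinomPow (k + l) k m * (∏ i ∈ range k, qnumPow (i + 1) m) *
        ∏ i ∈ range l, qnumPow (i + 1) m := by
  let φ : ℤ[X] →+* ℚ[X] := eval₂RingHom (C.comp (Int.castRingHom ℚ)) (X ^ m)
  have hfact (n : ℕ) : φ (qFactorial n) = ∏ i ∈ range n, qnumPow (i + 1) m := by
    simp [φ, qFactorial, qInt, qnumPow, pow_mul]
  have hbinom : φ (gaussBinom (k + l) k) = gaussBinomPow (k + l) k m := by
    rw [gaussBinomPow, comp, eval₂_map]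
    rfl
  simpa only [map_mul, hfact, hbinom] using
    congrArg φ (gaussBinom_mul_qFactorial_mul_qFactorial k l).symm

lemma exists_natPoly_map_eq (n k m c : ℕ) :
    ∃ P : ℕ[X], P.map (Nat.castRingHom ℚ) = gaussBinomPow n k m * qnumPow 2 c := by
  refine ⟨(∑ S ∈ powersetCard k (range n), X ^ (m * ((∑ i ∈ S, i) - k * (k - 1) / 2)))
    * (1 + X ^ c), ?_⟩
  simp [gaussBinomPow, gaussBinom, qnumPow_two, Polynomial.map_sum, pow_mul]

lemma prod_qnumPow_two_mul (n : ℕ) :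
    ∏ i ∈ range n, qnumPow (2 * (i + 1)) 2 =
      qnumPow 2 2 ^ n * ∏ i ∈ range n, qnumPow (i + 1) 4 := by
  simp only [qnumPow_two_mul, prod_mul_distrib, prod_const, card_range]

lemma qnumPow_mul_qnumPow_two (k : ℕ) :
    qnumPow k 2 * qnumPow 2 (2 * k) = qnumPow 2 2 * qnumPow k 4 := by
  rw [mul_comm, mul_comm 2 k, ← qnumPow_two_mul', qnumPow_two_mul]

lemma prod_qnumPow_two_mul_eq_mul_gaussBinomPow (j l : ℕ) :
    ∏ i ∈ range (j + 1 + l), qnumPow (2 * (i + 1)) 2 =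
      qnumPow (j + 1) 2 * (∏ i ∈ range j, qnumPow (2 * (i + 1)) 2) *
        (∏ i ∈ range l, qnumPow (2 * (i + 1)) 2) *
        (gaussBinomPow (j + 1 + l) (j + 1) 4 * qnumPow 2 (2 * (j + 1))) := by
  rw [prod_qnumPow_two_mul, prod_qnumPow_two_mul, prod_qnumPow_two_mul,
    prod_qnumPow_eq_gaussBinomPow_mul, prod_range_succ]
  linear_combination (-(qnumPow 2 2 ^ j * qnumPow 2 2 ^ l * gaussBinomPow (j + 1 + l) (j + 1) 4 *
    (∏ i ∈ range j, qnumPow (i + 1) 4) * ∏ i ∈ range l, qnumPow (i + 1) 4)) *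
    qnumPow_mul_qnumPow_two (j + 1)

theorem stmt_7_general (k l : ℕ) (hk : 0 < k) :
    (∏ i ∈ Finset.range (k + l),
          algebraMap (Polynomial ℚ) (RatFunc ℚ) (qnumPow (2 * (i + 1)) 2)) /
        (algebraMap (Polynomial ℚ) (RatFunc ℚ) (qnumPow k 2) *
          (∏ i ∈ Finset.range (k - 1),
            algebraMap (Polynomial ℚ) (RatFunc ℚ) (qnumPow (2 * (i + 1)) 2)) *
          ∏ i ∈ Finset.range l,
            algebraMap (Polynomial ℚ) (RatFunc ℚ) (qnumPow (2 * (i + 1)) 2)) =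
      algebraMap (Polynomial ℚ) (RatFunc ℚ) (gaussBinomPow (k + l) k 4 * qnumPow 2 (2 * k)) ∧
    (∀ j, 0 ≤ (gaussBinomPow (k + l) k 4 * qnumPow 2 (2 * k)).coeff j) ∧
    (∀ j, ∃ z : ℤ, (gaussBinomPow (k + l) k 4 * qnumPow 2 (2 * k)).coeff j = z) := by
  obtain ⟨j, rfl⟩ : ∃ j, k = j + 1 := ⟨k - 1, by omega⟩
  obtain ⟨P, hP⟩ := exists_natPoly_map_eq (j + 1 + l) (j + 1) 4 (2 * (j + 1))
  have hcoeff (i : ℕ) : (gaussBinomPow (j + 1 + l) (j + 1) 4 * qnumPow 2 (2 * (j + 1))).coeff i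
      = P.coeff i := by
    rw [← hP, coeff_map, eq_natCast]
  refine ⟨?_, fun i => hcoeff i ▸ Nat.cast_nonneg _, fun i => ⟨P.coeff i, by simp [hcoeff]⟩⟩
  have hden : qnumPow (j + 1) 2 * (∏ i ∈ range j, qnumPow (2 * (i + 1)) 2) *
      ∏ i ∈ range l, qnumPow (2 * (i + 1)) 2 ≠ 0 := by
    refine mul_ne_zero (mul_ne_zero (qnumPow_ne_zero j.succ_pos 2) ?_) ?_ <;>
      exact prod_ne_zero_iff.mpr fun i _ => qnumPow_ne_zero (by omega) 2
  rw [Nat.add_sub_cancel, ← map_prod, ← map_prod, ← map_prod, ← map_mul, ← map_mul,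
    div_eq_iff (RatFunc.algebraMap_ne_zero hden), ← map_mul,
    prod_qnumPow_two_mul_eq_mul_gaussBinomPow, mul_comm]

/-- For positive integers `k`, `l`, the rational function
`([2]_{t²}[4]_{t²}⋯[2k+2l]_{t²}) / ([k]_{t²}·[2]_{t²}⋯[2(k-1)]_{t²}·[2]_{t²}⋯[2l]_{t²})`
equals `binom(k+l,k)_{t⁴}·[2]_{t^{2k}}`; in particular it is a polynomial with
nonnegative integer coefficients. (This is the Poincaré polynomial of the real
Grassmannian `SO(2k+2l+1)/(SO(2k)×SO(2l+1))`.) -/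
theorem stmt_7 (k l : ℕ) (hk : 0 < k) (hl : 0 < l) :
    (∏ i ∈ Finset.range (k + l),
          algebraMap (Polynomial ℚ) (RatFunc ℚ) (qnumPow (2 * (i + 1)) 2)) /
        (algebraMap (Polynomial ℚ) (RatFunc ℚ) (qnumPow k 2) *
          (∏ i ∈ Finset.range (k - 1),
            algebraMap (Polynomial ℚ) (RatFunc ℚ) (qnumPow (2 * (i + 1)) 2)) *
          ∏ i ∈ Finset.range l,
            algebraMap (Polynomial ℚ) (RatFunc ℚ) (qnumPow (2 * (i + 1)) 2)) =
      algebraMap (Polynomial ℚ) (RatFunc ℚ) (gaussBinomPow (k + l) k 4 * qnumPow 2 (2 * k)) ∧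
    (∀ j, 0 ≤ (gaussBinomPow (k + l) k 4 * qnumPow 2 (2 * k)).coeff j) ∧
    (∀ j, ∃ z : ℤ, (gaussBinomPow (k + l) k 4 * qnumPow 2 (2 * k)).coeff j = z) :=
  stmt_7_general k l hk
end

section
/- Let g = h ⊕ p be an orthogonal symmetric decomposition of a compact-type Lie algebra as above, and define P : h → h by B_g(P·,·)|_{h×h} = B_h(·,·). Then P is symmetric with respect to the inner product −B_g|_h, and satisfies 0 ≤ P ≤ I, so every eigenvalue of the operator (1/2)(I − P) lies in [0, 1/2]. -/
open LinearMap (BilinForm trace)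
open LieAlgebra Set
open scoped RealInnerProductSpace

/-!
For `X ∈ 𝔥`, `ad X` is skew-adjoint for the inner product `-B_𝔤` and preserves both `𝔥` and
`𝔭 = 𝔥^⊥`, so on each of them the trace of `(ad X)²` is minus a Hilbert–Schmidt norm, hence `≤ 0`.
On `𝔥` this trace is `B_𝔥(X, X)`, and summed over `𝔤 = 𝔥 ⊕ 𝔭` it is `B_𝔤(X, X)`; therefore
`B_𝔤(X, X) ≤ B_𝔥(X, X) = B_𝔤(PX, X) ≤ 0`, which is `0 ≤ P ≤ I` for the inner product `-B_𝔤`.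
An eigenvector of `(I - P)/2` for `μ` is an eigenvector of `P` for `1 - 2μ`, which lies in `[0, 1]`.
-/

theorem LinearMap.trace_comp_self_nonpos_of_skew {E : Type*} [NormedAddCommGroup E]
    [InnerProductSpace ℝ E] [FiniteDimensional ℝ E] (A : E →ₗ[ℝ] E)
    (hA : ∀ x y, ⟪A x, y⟫ = -⟪x, A y⟫) : trace ℝ E (A ∘ₗ A) ≤ 0 := by
  rw [trace_eq_sum_inner _ (stdOrthonormalBasis ℝ E)]
  refine Finset.sum_nonpos fun i _ => ?_
  rw [comp_apply, real_inner_comm, hA, neg_nonpos]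
  exact real_inner_self_nonneg

namespace LinearMap.BilinForm

variable {V : Type*} [AddCommGroup V] [Module ℝ V]

abbrev negInnerProductCore (B : BilinForm ℝ V) (hB : B.IsSymm) (hneg : ∀ x ≠ 0, B x x < 0) :
    InnerProductSpace.Core ℝ V where
  inner x y := -B x y
  conj_inner_symm x y := by simp [hB.eq x y]
  re_inner_nonneg x := by
    rcases eq_or_ne x 0 with rfl | hx
    · simp
    · simpa using (hneg x hx).le
  add_left x y z := by simp only [map_add, LinearMap.add_apply, neg_add]
  smul_left x y r := by simp
  definite x hx := by
    by_contra h
    exact (hneg x h).ne (neg_eq_zero.1 hx)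

theorem trace_comp_self_nonpos_of_negDef [FiniteDimensional ℝ V] (B : BilinForm ℝ V)
    (hB : B.IsSymm) (hneg : ∀ x ≠ 0, B x x < 0) (A : V →ₗ[ℝ] V)
    (hA : ∀ x y, B (A x) y = -B x (A y)) : trace ℝ V (A ∘ₗ A) ≤ 0 := by
  let core := negInnerProductCore B hB hneg
  let _ := core.toNormedAddCommGroup
  let _ := InnerProductSpace.ofCore core.toCore
  exact A.trace_comp_self_nonpos_of_skew fun x y => congrArg Neg.neg (hA x y)

theorem isCompl_orthogonal_of_negDef [FiniteDimensional ℝ V] {B : BilinForm ℝ V}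
    (hB : B.IsSymm) (hneg : ∀ x ≠ 0, B x x < 0) (W : Submodule ℝ V) :
    IsCompl W (B.orthogonal W) := by
  refine (isCompl_orthogonal_iff_disjoint hB.isRefl).2
    (Submodule.disjoint_def.2 fun x hxW hx => ?_)
  by_contra hx0
  exact (hneg x hx0).ne (hx x hxW)

end LinearMap.BilinForm

theorem LinearMap.trace_eq_trace_restrict_add_trace_restrict {R M : Type*} [CommRing R]
    [AddCommGroup M] [Module R M] {S T : Submodule R M} (hST : IsCompl S T)
    [Module.Free R S] [Module.Finite R S] [Module.Free R T] [Module.Finite R T]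
    {f : M →ₗ[R] M} (hS : MapsTo f S S) (hT : MapsTo f T T) :
    trace R M f = trace R S (f.restrict hS) + trace R T (f.restrict hT) := by
  let N : Bool → Submodule R M := fun b => bif b then S else T
  have hN : DirectSum.IsInternal N :=
    (DirectSum.isInternal_submodule_iff_isCompl N (i := true) (j := false) (by simp)
      (by ext b; cases b <;> simp)).2 hST
  have _ : ∀ b, Module.Free R (N b) := fun b => by cases b <;> assumption
  have _ : ∀ b, Module.Finite R (N b) := fun b => by cases b <;> assumption
  have hf : ∀ b, MapsTo f (N b) (N b) := fun b => by cases b; exacts [hT, hS]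
  rw [trace_eq_sum_trace_restrict hN hf, Fintype.sum_bool]
  rfl

section KillingForm

variable {L : Type*} [LieRing L] [LieAlgebra ℝ L] [Module.Finite ℝ L]

theorem trace_restrict_ad_comp_self_nonpos (hneg : ∀ x : L, x ≠ 0 → killingForm ℝ L x x < 0)
    (x : L) {W : Submodule ℝ L} (hW : MapsTo (ad ℝ L x) W W) :
    trace ℝ W ((ad ℝ L x).restrict hW ∘ₗ (ad ℝ L x).restrict hW) ≤ 0 :=
  ((killingForm ℝ L).restrict W).trace_comp_self_nonpos_of_negDef
    ((⟨LieModule.traceForm_comm ℝ L L⟩ : (killingForm ℝ L).IsSymm).restrict W)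
    (fun y hy => hneg y (by simpa using hy)) _
    fun y z => LieModule.traceForm_apply_lie_apply' ℝ L L x y z

theorem killingForm_lieSubalgebra_apply_self_nonpos
    (hneg : ∀ x : L, x ≠ 0 → killingForm ℝ L x x < 0) (H : LieSubalgebra ℝ L) (X : H) :
    killingForm ℝ H X X ≤ 0 :=
  -- `ad_𝔥 X` is definitionally the restriction of `ad_𝔤 X` to `𝔥`.
  trace_restrict_ad_comp_self_nonpos hneg X (W := H.toSubmodule) fun _ hy => H.lie_mem X.2 hy

theorem killingForm_apply_self_le_killingForm_lieSubalgebra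
    (hneg : ∀ x : L, x ≠ 0 → killingForm ℝ L x x < 0) {H : LieSubalgebra ℝ L}
    {p : Submodule ℝ L} (hHp : IsCompl H.toSubmodule p) (hp : ∀ x ∈ H, ∀ y ∈ p, ⁅x, y⁆ ∈ p)
    (X : H) : killingForm ℝ L X X ≤ killingForm ℝ H X X := by
  have hH : MapsTo (ad ℝ L X) H H := fun _ hy => H.lie_mem X.2 hy
  have hp' : MapsTo (ad ℝ L X) p p := fun _ hy => hp _ X.2 _ hy
  have hsplit : killingForm ℝ L X X = killingForm ℝ H X X +
      trace ℝ p ((ad ℝ L X).restrict hp' ∘ₗ (ad ℝ L X).restrict hp') :=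
    LinearMap.trace_eq_trace_restrict_add_trace_restrict hHp
      (f := ad ℝ L X ∘ₗ ad ℝ L X) (hH.comp hH) (hp'.comp hp')
  linarith [trace_restrict_ad_comp_self_nonpos hneg X hp']

end KillingForm

theorem LinearMap.nonneg_and_le_half_of_half_smul_id_sub_apply_eq {V : Type*} [AddCommGroup V]
    [Module ℝ V] (P : V →ₗ[ℝ] V) (Q : BilinForm ℝ V) {v : V} (hv : 0 < Q v v)
    (hP₀ : 0 ≤ Q (P v) v) (hP₁ : Q (P v) v ≤ Q v v) {μ : ℝ}
    (hμ : ((1 / 2 : ℝ) • ((LinearMap.id : V →ₗ[ℝ] V) - P)) v = μ • v) : 0 ≤ μ ∧ μ ≤ 1 / 2 := by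
  have hPv : P v = (1 - 2 * μ) • v := by
    rw [LinearMap.smul_apply, LinearMap.sub_apply, LinearMap.id_apply] at hμ
    rw [sub_smul, one_smul, mul_smul, ← hμ, smul_smul]
    norm_num
  rw [hPv, map_smul, LinearMap.smul_apply, smul_eq_mul] at hP₀ hP₁
  constructor
  · nlinarith
  · nlinarith

theorem stmt_12_general (L : Type*) [LieRing L] [LieAlgebra ℝ L] [Module.Finite ℝ L]
    (hneg : ∀ x : L, x ≠ 0 → killingForm ℝ L x x < 0)
    (H : LieSubalgebra ℝ L) (p : Submodule ℝ L)
    (hperp : ∀ x : L, x ∈ p ↔ ∀ y ∈ H, killingForm ℝ L x y = 0)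
    (hhp : ∀ x ∈ H, ∀ y ∈ p, ⁅x, y⁆ ∈ p)
    (P : H →ₗ[ℝ] H)
    (hP : ∀ X Y : H, killingForm ℝ L (P X : L) (Y : L) = killingForm ℝ H X Y) :
    (∀ X Y : H, killingForm ℝ L (P X : L) (Y : L) = killingForm ℝ L (X : L) (P Y : L)) ∧
    (∀ X : H, 0 ≤ -killingForm ℝ L (P X : L) (X : L)) ∧
    (∀ X : H, -killingForm ℝ L (P X : L) (X : L) ≤ -killingForm ℝ L (X : L) (X : L)) ∧
    (∀ (μ : ℝ) (v : H), v ≠ 0 →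
      ((1 / 2 : ℝ) • ((LinearMap.id : H →ₗ[ℝ] H) - P)) v = μ • v → 0 ≤ μ ∧ μ ≤ 1 / 2) := by
  have hB : (killingForm ℝ L).IsSymm := ⟨LieModule.traceForm_comm ℝ L L⟩
  have hp_orth : p = (killingForm ℝ L).orthogonal H.toSubmodule := by
    ext x
    simp only [hperp, BilinForm.mem_orthogonal_iff, hB.eq x, LieSubalgebra.mem_toSubmodule]
  have hHp : IsCompl H.toSubmodule p :=
    hp_orth ▸ BilinForm.isCompl_orthogonal_of_negDef hB hneg _
  have hP_nonneg (X : H) : 0 ≤ -killingForm ℝ L (P X : L) (X : L) := by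
    rw [hP, neg_nonneg]
    exact killingForm_lieSubalgebra_apply_self_nonpos hneg H X
  have hP_le_one (X : H) :
      -killingForm ℝ L (P X : L) (X : L) ≤ -killingForm ℝ L (X : L) (X : L) := by
    rw [hP, neg_le_neg_iff]
    exact killingForm_apply_self_le_killingForm_lieSubalgebra hneg hHp hhp X
  refine ⟨fun X Y => ?_, hP_nonneg, hP_le_one, fun μ v hv hμ => ?_⟩
  · rw [hP, LieModule.traceForm_comm ℝ H H, ← hP, hB.eq]
  · exact P.nonneg_and_le_half_of_half_smul_id_sub_apply_eq
      (-(killingForm ℝ L).restrict H.toSubmodule) (neg_pos.2 (hneg v (by simpa using hv)))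
      (hP_nonneg v) (hP_le_one v) hμ

/-- Let `g = h ⊕ p` be an orthogonal symmetric decomposition of a compact-type real Lie
algebra (negative definite Killing form `B_g`), and let `P : h → h` be defined by
`B_g(P·,·)|_{h×h} = B_h(·,·)`. Then `P` is symmetric with respect to the inner product
`−B_g|_h`, satisfies `0 ≤ P ≤ I`, and every eigenvalue of `(1/2)(I − P)` (the curvature
operator of the symmetric space `G/H`) lies in `[0, 1/2]`. -/
theorem stmt_12 (L : Type*) [LieRing L] [LieAlgebra ℝ L] [Module.Finite ℝ L]
    (hneg : ∀ x : L, x ≠ 0 → killingForm ℝ L x x < 0)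
    (H : LieSubalgebra ℝ L) (p : Submodule ℝ L)
    (hperp : ∀ x : L, x ∈ p ↔ ∀ y ∈ H, killingForm ℝ L x y = 0)
    (hhp : ∀ x ∈ H, ∀ y ∈ p, ⁅x, y⁆ ∈ p)
    (hpp : ∀ x ∈ p, ∀ y ∈ p, ⁅x, y⁆ ∈ H)
    (P : H →ₗ[ℝ] H)
    (hP : ∀ X Y : H, killingForm ℝ L (P X : L) (Y : L) = killingForm ℝ H X Y) :
    (∀ X Y : H, killingForm ℝ L (P X : L) (Y : L) = killingForm ℝ L (X : L) (P Y : L)) ∧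
    (∀ X : H, 0 ≤ -killingForm ℝ L (P X : L) (X : L)) ∧
    (∀ X : H, -killingForm ℝ L (P X : L) (X : L) ≤ -killingForm ℝ L (X : L) (X : L)) ∧
    (∀ (μ : ℝ) (v : H), v ≠ 0 →
      ((1 / 2 : ℝ) • ((LinearMap.id : H →ₗ[ℝ] H) - P)) v = μ • v → 0 ≤ μ ∧ μ ≤ 1 / 2) :=
  stmt_12_general L hneg H p hperp hhp P hP
end
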